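/- arXiv:1606.04177 — 6 statements merged into one kernel-verified Lean document; each statement's English description precedes it below -/
import Mathlib

section
/- Let {p_i : i ∈ I} be a set of pairwise relatively prime integers, each ≥ 2, with |I| ≥ 2, and let M be the additive submonoid of ℚ generated by {1/p_i : i ∈ I}. Then the set of atoms (additively indecomposable nonzero elements) of M is exactly {1/p_i : i ∈ I}. -/
/-- The atoms of the additive submonoid of `ℚ` generated by the reciprocals of a family
(of size at least 2) of pairwise relatively prime integers `p i ≥ 2` are exactly the
reciprocals `1 / p i`. -/
theorem stmt1 {I : Type*} (hI : ∃ i j : I, i ≠ j) (p : I → ℤ) (hp : ∀ i, 2 ≤ p i)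
    (hcop : ∀ i j, i ≠ j → IsCoprime (p i) (p j))
    (M : AddSubmonoid ℚ) (hM : M = AddSubmonoid.closure (Set.range fun i => ((p i : ℚ))⁻¹)) :
    {m : ℚ | m ∈ M ∧ m ≠ 0 ∧ ∀ a ∈ M, ∀ b ∈ M, m = a + b → a = 0 ∨ b = 0}
      = Set.range fun i => ((p i : ℚ))⁻¹ := by
  classical
  subst hM
  set S : Set ℚ := Set.range fun i => ((p i : ℚ))⁻¹ with hS
  have hpQ : ∀ i, ((p i : ℚ)) ≠ 0 := by
    intro i
    have := lt_of_lt_of_le (by norm_num : (0:ℤ) < 2) (hp i)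
    exact_mod_cast this.ne'
  have hppos : ∀ i, (0:ℚ) < ((p i : ℚ))⁻¹ := by
    intro i
    have h2 : (0:ℚ) < (p i : ℚ) := by exact_mod_cast lt_of_lt_of_le (by norm_num) (hp i)
    positivity
  -- nonnegativity / positivity of sums
  have hsumnn : ∀ (J : Multiset I), (0:ℚ) ≤ (J.map fun j => ((p j : ℚ))⁻¹).sum := by
    intro J
    refine Multiset.sum_nonneg ?_
    intro x hx
    obtain ⟨l, _, rfl⟩ := Multiset.mem_map.mp hx
    exact (hppos l).le
  have hsumpos : ∀ (J : Multiset I), J ≠ 0 → (0:ℚ) < (J.map fun j => ((p j : ℚ))⁻¹).sum := by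
    intro J hJ
    obtain ⟨j, hj⟩ := Multiset.exists_mem_of_ne_zero hJ
    obtain ⟨J', rfl⟩ := Multiset.exists_cons_of_mem hj
    rw [Multiset.map_cons, Multiset.sum_cons]
    have := hsumnn J'
    linarith [hppos j]
  -- any multiset of elements of S comes from a multiset of indices
  have hindex : ∀ (T : Multiset ℚ), (∀ x ∈ T, x ∈ S) →
      ∃ J : Multiset I, J.map (fun j => ((p j : ℚ))⁻¹) = T := by
    intro T
    induction T using Multiset.induction with
    | empty => intro _; exact ⟨0, rfl⟩
    | cons x T ih =>
      intro h
      obtain ⟨i, hi⟩ := h x (Multiset.mem_cons_self x T)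
      obtain ⟨J, hJ⟩ := ih (fun y hy => h y (Multiset.mem_cons_of_mem hy))
      exact ⟨i ::ₘ J, by simp [hJ, hi]⟩
  -- sum over index multiset times product of denominators is an integer
  have hint : ∀ (J : Multiset I), ∃ N : ℤ,
      (J.map fun j => ((p j : ℚ))⁻¹).sum * (((J.map p).prod : ℤ) : ℚ) = (N : ℚ) := by
    intro J
    induction J using Multiset.induction with
    | empty => exact ⟨0, by simp⟩
    | cons j J ih =>
      obtain ⟨N, hN⟩ := ih
      refine ⟨(J.map p).prod + N * p j, ?_⟩
      rw [Multiset.map_cons, Multiset.map_cons, Multiset.sum_cons, Multiset.prod_cons,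
        Int.cast_add, Int.cast_mul, Int.cast_mul]
      have hinv : ((p j : ℚ))⁻¹ * (p j : ℚ) = 1 := inv_mul_cancel₀ (hpQ j)
      linear_combination (p j : ℚ) * hN + (((J.map p).prod : ℤ) : ℚ) * hinv
  -- coprimality with products
  have hcop' : ∀ (i : I) (J : Multiset I), (∀ j ∈ J, j ≠ i) →
      IsCoprime (p i) ((J.map p).prod) := by
    intro i J
    induction J using Multiset.induction with
    | empty => intro _; simpa using isCoprime_one_right
    | cons j J ih =>
      intro h
      rw [Multiset.map_cons, Multiset.prod_cons]
      exact ((hcop i j (h j (Multiset.mem_cons_self j J)).symm).mul_right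
        (ih fun k hk => h k (Multiset.mem_cons_of_mem hk)))
  -- key: sums over index multisets of card ≥ 2 are never 1/p i
  have hkey : ∀ (i : I) (J : Multiset I), 2 ≤ Multiset.card J →
      (J.map fun j => ((p j : ℚ))⁻¹).sum ≠ ((p i : ℚ))⁻¹ := by
    intro i J hcard hsum
    by_cases hiJ : i ∈ J
    · obtain ⟨J', rfl⟩ := Multiset.exists_cons_of_mem hiJ
      rw [Multiset.map_cons, Multiset.sum_cons] at hsum
      have hz : (J'.map fun j => ((p j : ℚ))⁻¹).sum = 0 := by linarith
      have hJ' : J' ≠ 0 := by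
        rintro rfl; simp at hcard
      linarith [hsumpos J' hJ']
    · obtain ⟨N, hN⟩ := hint J
      rw [hsum] at hN
      have hinv : ((p i : ℚ)) * ((p i : ℚ))⁻¹ = 1 := mul_inv_cancel₀ (hpQ i)
      have hQ : (((J.map p).prod : ℤ) : ℚ) = (N : ℚ) * (p i : ℚ) := by
        linear_combination (p i : ℚ) * hN - (((J.map p).prod : ℤ) : ℚ) * hinv
      have hZ : (J.map p).prod = N * p i := by exact_mod_cast hQ
      have hdvd : p i ∣ (J.map p).prod := ⟨N, by rw [hZ, mul_comm]⟩
      have hunit : IsUnit (p i) :=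
        (hcop' i J fun j hj hji => hiJ (hji ▸ hj)).isUnit_of_dvd hdvd
      rw [Int.isUnit_iff] at hunit
      have := hp i
      omega
  ext m
  simp only [Set.mem_setOf_eq]
  constructor
  · rintro ⟨hm, hm0, hatom⟩
    obtain ⟨T, hT, hTsum⟩ := AddSubmonoid.exists_multiset_of_mem_closure hm
    obtain ⟨J, rfl⟩ := hindex T hT
    have hJ0 : J ≠ 0 := by
      rintro rfl; simp at hTsum; exact hm0 hTsum.symm
    obtain ⟨j, hj⟩ := Multiset.exists_mem_of_ne_zero hJ0
    obtain ⟨J', rfl⟩ := Multiset.exists_cons_of_mem hj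
    by_cases hJ' : J' = 0
    · subst hJ'
      exact ⟨j, by simpa using hTsum⟩
    · exfalso
      have hmem1 : ((p j : ℚ))⁻¹ ∈ AddSubmonoid.closure S :=
        AddSubmonoid.subset_closure ⟨j, rfl⟩
      have hmem2 : (J'.map fun j => ((p j : ℚ))⁻¹).sum ∈ AddSubmonoid.closure S := by
        refine AddSubmonoid.multiset_sum_mem _ _ ?_
        intro x hx
        obtain ⟨l, _, rfl⟩ := Multiset.mem_map.mp hx
        exact AddSubmonoid.subset_closure ⟨l, rfl⟩
      have hsplit : m = ((p j : ℚ))⁻¹ + (J'.map fun j => ((p j : ℚ))⁻¹).sum := by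
        rw [← hTsum, Multiset.map_cons, Multiset.sum_cons]
      rcases hatom _ hmem1 _ hmem2 hsplit with h | h
      · exact (hppos j).ne' h
      · exact (hsumpos J' hJ').ne' h
  · rintro ⟨i, rfl⟩
    refine ⟨AddSubmonoid.subset_closure ⟨i, rfl⟩, (hppos i).ne', ?_⟩
    intro a ha b hb hab
    by_contra hcon
    push_neg at hcon
    obtain ⟨ha0, hb0⟩ := hcon
    obtain ⟨Ta, hTa, hTasum⟩ := AddSubmonoid.exists_multiset_of_mem_closure ha
    obtain ⟨Tb, hTb, hTbsum⟩ := AddSubmonoid.exists_multiset_of_mem_closure hb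
    obtain ⟨Ja, rfl⟩ := hindex Ta hTa
    obtain ⟨Jb, rfl⟩ := hindex Tb hTb
    have hJa : Ja ≠ 0 := by rintro rfl; simp at hTasum; exact ha0 hTasum.symm
    have hJb : Jb ≠ 0 := by rintro rfl; simp at hTbsum; exact hb0 hTbsum.symm
    have hcard : 2 ≤ Multiset.card (Ja + Jb) := by
      rw [Multiset.card_add]
      have h1 := Multiset.card_pos.mpr hJa
      have h2 := Multiset.card_pos.mpr hJb
      omega
    refine hkey i (Ja + Jb) hcard ?_
    rw [Multiset.map_add, Multiset.sum_add, hTasum, hTbsum]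
    exact hab.symm
end

section
/- Let G be the group ℤ ⋊ ℤ generated by x, y with relation x y x⁻¹ = y⁻¹. Then the set {b ∈ G : there exists a ∈ G with a b a⁻¹ = b⁻¹} equals the subgroup generated by y. -/
/-- The group `ℤ ⋊ ℤ` where the generator of the second factor acts on the first by
negation (multiplicatively: `x y x⁻¹ = y⁻¹`). -/
abbrev Zm := Multiplicative ℤ

/-- The automorphism of inversion. -/
def negAut : MulAut Zm := MulEquiv.inv Zm

/-- The action of the second factor: the generator acts by inversion. -/
def phi : Zm →* MulAut Zm := zpowersHom (MulAut Zm) negAut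

/-- The semidirect product `ℤ ⋊ ℤ` with relation `x y x⁻¹ = y⁻¹`. -/
abbrev Gsd := Zm ⋊[phi] Zm

/-- The generator of the acting copy of `ℤ`. -/
def xg : Gsd := SemidirectProduct.inr (Multiplicative.ofAdd 1)

/-- The generator of the normal copy of `ℤ`. -/
def yg : Gsd := SemidirectProduct.inl (Multiplicative.ofAdd 1)

theorem Int.zpowers_ofAdd_one : Subgroup.zpowers (Multiplicative.ofAdd (1 : ℤ)) = ⊤ :=
  (Subgroup.eq_top_iff' _).mpr fun n => ⟨n.toAdd, by simp [← ofAdd_zsmul]⟩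

namespace SemidirectProduct

variable {N G : Type*} [Group N] [CommGroup G] {φ : G →* MulAut N}

theorem right_mul_mul_inv (a b : N ⋊[φ] G) : (a * b * a⁻¹).right = b.right := by
  simp only [mul_right, inv_right, mul_inv_cancel_comm]

/-- Conjugation does not move the `G`-coordinate, so `b.right` is its own inverse. -/
theorem mem_range_inl_of_mul_mul_inv_eq_inv [IsMulTorsionFree G] {a b : N ⋊[φ] G}
    (h : a * b * a⁻¹ = b⁻¹) : b ∈ (inl : N →* N ⋊[φ] G).range := by
  have hb : b.right = b.right⁻¹ := (right_mul_mul_inv a b).symm.trans (congrArg right h)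
  rw [range_inl_eq_ker_rightHom, MonoidHom.mem_ker, rightHom_eq_right]
  exact self_eq_inv.mp hb

end SemidirectProduct

open SemidirectProduct

theorem zpowers_yg : Subgroup.zpowers yg = (inl : Zm →* Gsd).range := by
  rw [yg, ← MonoidHom.map_zpowers, Int.zpowers_ofAdd_one, MonoidHom.range_eq_map]

theorem xg_mul_inl_mul_inv (n : Zm) : xg * inl n * xg⁻¹ = (inl n)⁻¹ := by
  rw [xg, ← map_inv, ← inl_aut, ← map_inv]
  -- `phi (ofAdd 1) = negAut` acts by inversion
  rfl

/-- In `ℤ ⋊ ℤ` (with `x y x⁻¹ = y⁻¹`), the set of elements conjugate to their own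
inverse is exactly the subgroup generated by `y`. -/
theorem stmt5 : {b : Gsd | ∃ a : Gsd, a * b * a⁻¹ = b⁻¹} = (Subgroup.zpowers yg : Set Gsd) := by
  ext b
  rw [SetLike.mem_coe, zpowers_yg]
  constructor
  · rintro ⟨a, h⟩
    exact mem_range_inl_of_mul_mul_inv_eq_inv h
  · rintro ⟨n, rfl⟩
    exact ⟨xg, xg_mul_inl_mul_inv n⟩
end

section
/- Let G be a group and χ : G → k× a character with associated algebra automorphism σ_χ of the group algebra kG defined by σ_χ(g) = χ(g)g. Then for any central element e ∈ G, the Ore extension H = kG[z; σ_χ] is a Hopf algebra extending the Hopf structure on kG, with z a (1, e)-skew primitive element: Δ(z) = z ⊗ 1 + e ⊗ z, ε(z) = 0, S(z) = −e⁻¹ z. -/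
/-!
Since `H` is free over `k` on the monomials `g zⁿ` and `z g = χ(g) g z` is all that is needed to
multiply two monomials, an algebra map out of `H` amounts to an algebra map `f` out of `kG` together
with an element `w` satisfying `w f(g) = χ(g) f(g) w`. The comultiplication, counit and antipode
of `kG` extend in this way with `w = z ⊗ 1 + e ⊗ z`, `0` and `-e⁻¹ z`; centrality of `e` is what
makes the first and the last satisfy the relation. Coassociativity and the counit axioms are
equalities of algebra maps, so they only need checking on the generators `g` and `z`. The antipode
identities are not, but since `S` reverses products and `Δ` preserves them, the elements on which
they hold form a subalgebra, which again contains the generators.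
-/

open scoped TensorProduct

open MonoidAlgebra MulOpposite

section SkewCommutation

variable {k G B : Type*} [CommSemiring k] [Monoid G] [Semiring B] [Algebra k B]

def SkewCommutes (χ : G → k) (f : MonoidAlgebra k G →ₐ[k] B) (w : B) : Prop :=
  ∀ g, w * f (of k G g) = χ g • (f (of k G g) * w)

theorem pow_mul_eq_smul_mul_pow {c w : B} {u : k} (h : w * c = u • (c * w)) (n : ℕ) :
    w ^ n * c = u ^ n • (c * w ^ n) := by
  induction n with
  | zero => simp
  | succ n ih =>
    rw [pow_succ, mul_assoc, h, mul_smul_comm, ← mul_assoc, ih, smul_mul_assoc, smul_smul,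
      mul_assoc, ← pow_succ, ← pow_succ']

namespace SkewCommutes

variable {χ : G → k} {f : MonoidAlgebra k G →ₐ[k] B} {w : B}

theorem zero : SkewCommutes χ f 0 := fun g => by simp

theorem mul_pow_mul_mul_pow (hw : SkewCommutes χ f w) (g h : G) (n m : ℕ) :
    f (of k G g) * w ^ n * (f (of k G h) * w ^ m)
      = χ h ^ n • (f (of k G (g * h)) * w ^ (n + m)) := by
  rw [mul_assoc, ← mul_assoc (w ^ n), pow_mul_eq_smul_mul_pow (hw h), smul_mul_assoc,
    mul_smul_comm, map_mul, map_mul]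
  simp only [mul_assoc, pow_add]

end SkewCommutes

end SkewCommutation

section OreExtension

variable {k G H B : Type*} [CommSemiring k] [Monoid G] [Semiring H] [Algebra k H]
  [Semiring B] [Algebra k B] {ι : MonoidAlgebra k G →ₐ[k] H} {z : H}

theorem exists_algHom_of_skewCommutes {χ : G → k} (b : Module.Basis (G × ℕ) k H)
    (hb : ∀ g n, b (g, n) = ι (of k G g) * z ^ n) (hz : SkewCommutes χ ι z)
    {f : MonoidAlgebra k G →ₐ[k] B} {w : B} (hw : SkewCommutes χ f w) :
    ∃ φ : H →ₐ[k] B, (∀ g, φ (ι (of k G g)) = f (of k G g)) ∧ φ z = w := by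
  let φ : H →ₗ[k] B := b.constr k fun p => f (of k G p.1) * w ^ p.2
  have hφ (g : G) (n : ℕ) : φ (ι (of k G g) * z ^ n) = f (of k G g) * w ^ n := by
    rw [← hb]; exact b.constr_basis k _ (g, n)
  have hφ_mul : (LinearMap.mul k H).compr₂ φ = (LinearMap.mul k B).compl₁₂ φ φ := by
    refine b.ext fun ⟨g, n⟩ => b.ext fun ⟨h, m⟩ => ?_
    simp only [LinearMap.compr₂_apply, LinearMap.compl₁₂_apply, LinearMap.mul_apply', hb]
    rw [hz.mul_pow_mul_mul_pow, map_smul, hφ, hφ, hφ, hw.mul_pow_mul_mul_pow]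
  have hφ_one : φ 1 = 1 := by simpa only [map_one, pow_zero, mul_one] using hφ 1 0
  refine ⟨.ofLinearMap φ hφ_one fun x y => LinearMap.congr_fun (LinearMap.congr_fun hφ_mul x) y,
    fun g => (?_ : φ _ = _), (?_ : φ _ = _)⟩
  · simpa only [pow_zero, mul_one] using hφ g 0
  · simpa only [map_one, pow_one, one_mul] using hφ 1 1

theorem adjoin_insert_range_eq_top (b : Module.Basis (G × ℕ) k H)
    (hb : ∀ g n, b (g, n) = ι (of k G g) * z ^ n) :
    Algebra.adjoin k (insert z (Set.range fun g => ι (of k G g))) = ⊤ := by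
  refine eq_top_iff.2 fun x _ => ?_
  have hx : x ∈ Submodule.span k (Set.range b) := b.span_eq ▸ Submodule.mem_top
  rw [← Subalgebra.mem_toSubmodule]
  refine Submodule.span_le.2 ?_ hx
  rintro _ ⟨⟨g, n⟩, rfl⟩
  rw [SetLike.mem_coe, Subalgebra.mem_toSubmodule, hb]
  exact mul_mem (Algebra.subset_adjoin (by simp)) (pow_mem (Algebra.subset_adjoin (by simp)) n)

theorem algHom_ext_of_adjoin_insert_range_eq_top
    (hgen : Algebra.adjoin k (insert z (Set.range fun g => ι (of k G g))) = ⊤)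
    {φ ψ : H →ₐ[k] B} (hg : ∀ g, φ (ι (of k G g)) = ψ (ι (of k G g))) (hz : φ z = ψ z) :
    φ = ψ :=
  AlgHom.ext_of_adjoin_eq_top hgen <| by
    rintro _ (rfl | ⟨g, rfl⟩)
    exacts [hz, hg g]

end OreExtension

section MulAntipode

variable {k H : Type*} [CommSemiring k] [Semiring H] [Algebra k H] (S : H →ₐ[k] Hᵐᵒᵖ)

def mulAntipodeRTensor : H ⊗[k] H →ₗ[k] H :=
  LinearMap.mul' k H ∘ₗ
    TensorProduct.map ((opLinearEquiv k).symm.toLinearMap ∘ₗ S.toLinearMap) LinearMap.id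

def mulAntipodeLTensor : H ⊗[k] H →ₗ[k] H :=
  LinearMap.mul' k H ∘ₗ
    TensorProduct.map LinearMap.id ((opLinearEquiv k).symm.toLinearMap ∘ₗ S.toLinearMap)

@[simp]
theorem mulAntipodeRTensor_tmul (a b : H) : mulAntipodeRTensor S (a ⊗ₜ b) = unop (S a) * b := rfl

@[simp]
theorem mulAntipodeLTensor_tmul (a b : H) : mulAntipodeLTensor S (a ⊗ₜ b) = a * unop (S b) := rfl

theorem mulAntipodeRTensor_mul_tmul (s : H ⊗[k] H) (c d : H) :
    mulAntipodeRTensor S (s * c ⊗ₜ d) = unop (S c) * mulAntipodeRTensor S s * d := by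
  induction s using TensorProduct.induction_on with
  | zero => simp
  | tmul a b => simp [mul_assoc]
  | add x y hx hy => simp only [add_mul, map_add, hx, hy, mul_add]

theorem mulAntipodeLTensor_tmul_mul (s : H ⊗[k] H) (c d : H) :
    mulAntipodeLTensor S (c ⊗ₜ d * s) = c * mulAntipodeLTensor S s * unop (S d) := by
  induction s using TensorProduct.induction_on with
  | zero => simp
  | tmul a b => simp [mul_assoc]
  | add x y hx hy => simp only [mul_add, map_add, hx, hy, add_mul]

variable (Δ : H →ₐ[k] H ⊗[k] H) (ε : H →ₐ[k] k)

def mulAntipodeRTensorEqLocus : Subalgebra k H where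
  carrier := {h | mulAntipodeRTensor S (Δ h) = algebraMap k H (ε h)}
  mul_mem' {x y} hx hy := by
    have hx_mul (t : H ⊗[k] H) : mulAntipodeRTensor S (Δ x * t) = ε x • mulAntipodeRTensor S t := by
      induction t using TensorProduct.induction_on with
      | zero => simp
      | tmul c d =>
        rw [mulAntipodeRTensor_mul_tmul, hx, mulAntipodeRTensor_tmul, mul_assoc, Algebra.left_comm,
          Algebra.smul_def]
      | add u v hu hv => simp only [mul_add, map_add, hu, hv, smul_add]
    rw [Set.mem_ofPred_eq] at hy ⊢
    rw [map_mul, hx_mul, hy, Algebra.smul_def, map_mul, map_mul]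
  add_mem' hx hy := by simp_all
  algebraMap_mem' r := by simp [Algebra.TensorProduct.algebraMap_apply]

def mulAntipodeLTensorEqLocus : Subalgebra k H where
  carrier := {h | mulAntipodeLTensor S (Δ h) = algebraMap k H (ε h)}
  mul_mem' {x y} hx hy := by
    have hy_mul (t : H ⊗[k] H) : mulAntipodeLTensor S (t * Δ y) = ε y • mulAntipodeLTensor S t := by
      induction t using TensorProduct.induction_on with
      | zero => simp
      | tmul c d =>
        rw [mulAntipodeLTensor_tmul_mul, hy, mulAntipodeLTensor_tmul, ← Algebra.commutes,
          mul_assoc, Algebra.smul_def]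
      | add u v hu hv => simp only [add_mul, map_add, hu, hv, smul_add]
    rw [Set.mem_ofPred_eq] at hx ⊢
    rw [map_mul, hy_mul, hx, Algebra.smul_def, map_mul, map_mul, Algebra.commutes]
  add_mem' hx hy := by simp_all
  algebraMap_mem' r := by simp [Algebra.TensorProduct.algebraMap_apply]

end MulAntipode

section SkewPrimitive

variable {k G H : Type*} [CommRing k] [Group G] [Ring H] [Algebra k H]
  {ι : MonoidAlgebra k G →ₐ[k] H} {z : H}

theorem skewCommutes_comul {χ : G → k} {e : G} (he : ∀ g, Commute e g)
    (hz : SkewCommutes χ ι z) :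
    SkewCommutes χ ((Algebra.TensorProduct.map ι ι).comp (Bialgebra.comulAlgHom k _))
      (z ⊗ₜ[k] (1 : H) + ι (of k G e) ⊗ₜ[k] z) := by
  intro g
  have hΔ : (Algebra.TensorProduct.map ι ι).comp (Bialgebra.comulAlgHom k _) (of k G g)
      = ι (of k G g) ⊗ₜ[k] ι (of k G g) := by simp
  have hcomm : ι (of k G e) * ι (of k G g) = ι (of k G g) * ι (of k G e) := by
    simp only [← map_mul, (he g).eq]
  simp only [hΔ, add_mul, mul_add, Algebra.TensorProduct.tmul_mul_tmul, hz g, one_mul, mul_one,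
    hcomm, smul_add, TensorProduct.tmul_smul, TensorProduct.smul_tmul']

theorem skewCommutes_antipode (χ : G →* kˣ) {e : G} (he : ∀ g, Commute e g)
    (hz : SkewCommutes (fun g => (χ g : k)) ι z) :
    SkewCommutes (fun g => (χ g : k)) ((AlgHom.op ι).comp (HopfAlgebra.antipodeAlgHomOp k _))
      (op (-(ι (of k G e⁻¹) * z))) := by
  intro g
  have hS : (AlgHom.op ι).comp (HopfAlgebra.antipodeAlgHomOp k _) (of k G g)
      = op (ι (of k G g⁻¹)) := by simp
  have hcomm : ι (of k G g⁻¹) * ι (of k G e⁻¹) = ι (of k G e⁻¹) * ι (of k G g⁻¹) := by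
    simp only [← map_mul, ((he g).inv_inv).eq]
  have hχ : (χ g : k) * χ g⁻¹ = 1 := by simp [← Units.val_mul]
  rw [hS, ← op_mul, ← op_mul, ← op_smul, mul_neg, neg_mul, smul_neg, mul_assoc (ι _),
    hz g⁻¹, mul_smul_comm, smul_smul, hχ, one_smul, ← mul_assoc, ← mul_assoc, hcomm]

end SkewPrimitive

section HopfStructure

variable {k G H : Type*} [CommSemiring k] [Monoid G] [Semiring H] [Algebra k H]
  {ι : MonoidAlgebra k G →ₐ[k] H} {z : H} {e : G} {Δ : H →ₐ[k] H ⊗[k] H} {ε : H →ₐ[k] k}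

theorem coassoc_apply_of_adjoin_eq_top
    (hgen : Algebra.adjoin k (insert z (Set.range fun g => ι (of k G g))) = ⊤)
    (hΔg : ∀ g, Δ (ι (of k G g)) = ι (of k G g) ⊗ₜ[k] ι (of k G g))
    (hΔz : Δ z = z ⊗ₜ[k] (1 : H) + ι (of k G e) ⊗ₜ[k] z) (h : H) :
    TensorProduct.assoc k H H H (TensorProduct.map Δ.toLinearMap LinearMap.id (Δ h))
      = TensorProduct.map LinearMap.id Δ.toLinearMap (Δ h) := by
  have hΔ : (Algebra.TensorProduct.assoc k k k H H H).toAlgHom.comp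
      ((Algebra.TensorProduct.map Δ (.id k H)).comp Δ)
        = (Algebra.TensorProduct.map (.id k H) Δ).comp Δ :=
    -- `of_apply` would unfold `of k G g` to `single g 1`, out of reach of `hΔg`
    algHom_ext_of_adjoin_insert_range_eq_top hgen (fun g => by simp [-of_apply, hΔg])
      (by simp [-of_apply, hΔg, hΔz, Algebra.TensorProduct.one_def, TensorProduct.add_tmul,
        TensorProduct.tmul_add, add_assoc])
  exact congr($hΔ h)

theorem lid_counit_comul_of_adjoin_eq_top
    (hgen : Algebra.adjoin k (insert z (Set.range fun g => ι (of k G g))) = ⊤)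
    (hΔg : ∀ g, Δ (ι (of k G g)) = ι (of k G g) ⊗ₜ[k] ι (of k G g))
    (hΔz : Δ z = z ⊗ₜ[k] (1 : H) + ι (of k G e) ⊗ₜ[k] z)
    (hεg : ∀ g, ε (ι (of k G g)) = 1) (hεz : ε z = 0) (h : H) :
    TensorProduct.lid k H (TensorProduct.map ε.toLinearMap LinearMap.id (Δ h)) = h := by
  have hΔ : (Algebra.TensorProduct.lid k H).toAlgHom.comp
      ((Algebra.TensorProduct.map ε (.id k H)).comp Δ) = .id k H :=
    algHom_ext_of_adjoin_insert_range_eq_top hgen (fun g => by simp [-of_apply, hΔg, hεg])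
      (by simp [-of_apply, hΔz, hεg, hεz])
  exact congr($hΔ h)

theorem rid_counit_comul_of_adjoin_eq_top
    (hgen : Algebra.adjoin k (insert z (Set.range fun g => ι (of k G g))) = ⊤)
    (hΔg : ∀ g, Δ (ι (of k G g)) = ι (of k G g) ⊗ₜ[k] ι (of k G g))
    (hΔz : Δ z = z ⊗ₜ[k] (1 : H) + ι (of k G e) ⊗ₜ[k] z)
    (hεg : ∀ g, ε (ι (of k G g)) = 1) (hεz : ε z = 0) (h : H) :
    TensorProduct.rid k H (TensorProduct.map LinearMap.id ε.toLinearMap (Δ h)) = h := by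
  have hΔ : (Algebra.TensorProduct.rid k k H).toAlgHom.comp
      ((Algebra.TensorProduct.map (.id k H) ε).comp Δ) = .id k H :=
    algHom_ext_of_adjoin_insert_range_eq_top hgen (fun g => by simp [-of_apply, hΔg, hεg])
      (by simp [-of_apply, hΔz, hεz])
  exact congr($hΔ h)

end HopfStructure

section OreAntipode

variable {k G H : Type*} [CommRing k] [Group G] [Ring H] [Algebra k H]
  {ι : MonoidAlgebra k G →ₐ[k] H} {z : H} {e : G} {Δ : H →ₐ[k] H ⊗[k] H} {ε : H →ₐ[k] k}
  {S : H →ₐ[k] Hᵐᵒᵖ}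

theorem mul_antipode_rTensor_comul_of_adjoin_eq_top
    (hgen : Algebra.adjoin k (insert z (Set.range fun g => ι (of k G g))) = ⊤)
    (hΔg : ∀ g, Δ (ι (of k G g)) = ι (of k G g) ⊗ₜ[k] ι (of k G g))
    (hΔz : Δ z = z ⊗ₜ[k] (1 : H) + ι (of k G e) ⊗ₜ[k] z)
    (hεg : ∀ g, ε (ι (of k G g)) = 1) (hεz : ε z = 0)
    (hSg : ∀ g, S (ι (of k G g)) = op (ι (of k G g⁻¹))) (hSz : S z = op (-(ι (of k G e⁻¹) * z)))
    (h : H) :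
    mulAntipodeRTensor S (Δ h) = algebraMap k H (ε h) := by
  suffices ⊤ ≤ mulAntipodeRTensorEqLocus S Δ ε from this Algebra.mem_top
  rw [← hgen, Algebra.adjoin_le_iff, Set.insert_subset_iff, Set.range_subset_iff]
  refine ⟨?_, fun g => ?_⟩
  · simp [-of_apply, mulAntipodeRTensorEqLocus, hΔz, hSz, hSg, hεz]
  · simp [-of_apply, mulAntipodeRTensorEqLocus, hΔg, hSg, hεg, ← map_mul]

theorem mul_antipode_lTensor_comul_of_adjoin_eq_top
    (hgen : Algebra.adjoin k (insert z (Set.range fun g => ι (of k G g))) = ⊤)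
    (hΔg : ∀ g, Δ (ι (of k G g)) = ι (of k G g) ⊗ₜ[k] ι (of k G g))
    (hΔz : Δ z = z ⊗ₜ[k] (1 : H) + ι (of k G e) ⊗ₜ[k] z)
    (hεg : ∀ g, ε (ι (of k G g)) = 1) (hεz : ε z = 0)
    (hSg : ∀ g, S (ι (of k G g)) = op (ι (of k G g⁻¹))) (hSz : S z = op (-(ι (of k G e⁻¹) * z)))
    (h : H) :
    mulAntipodeLTensor S (Δ h) = algebraMap k H (ε h) := by
  suffices ⊤ ≤ mulAntipodeLTensorEqLocus S Δ ε from this Algebra.mem_top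
  rw [← hgen, Algebra.adjoin_le_iff, Set.insert_subset_iff, Set.range_subset_iff]
  refine ⟨?_, fun g => ?_⟩
  · simp [-of_apply, mulAntipodeLTensorEqLocus, hΔz, hSz, hεz, ← mul_assoc, ← map_mul]
  · simp [-of_apply, mulAntipodeLTensorEqLocus, hΔg, hSg, hεg, ← map_mul]

end OreAntipode

/-- Let `χ : G → kˣ` be a character of a group `G`, let `e` be central in `G` and let
`H = kG[z; σ_χ]` be the Ore extension of the group algebra (i.e. `H` contains `kG`, has
the commutation rule `z·g = χ(g)·g·z`, and is free over `kG` with basis the powers of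
`z`).  Then the Hopf algebra structure of `kG` extends to `H` with `z` a `(1, e)`-skew
primitive element: `Δ(z) = z ⊗ 1 + e ⊗ z`, `ε(z) = 0`, `S(z) = -e⁻¹ z`. -/
theorem stmt14 {k : Type u} [Field k] {G : Type u} [Group G]
    (χ : G →* kˣ) (e : G) (he : ∀ g : G, e * g = g * e)
    (H : Type u) [Ring H] [Algebra k H]
    (ι : MonoidAlgebra k G →ₐ[k] H) (z : H)
    (hrel : ∀ g : G, z * ι (of k G g) = (χ g : k) • (ι (of k G g) * z))
    (hbasis : ∃ b : Module.Basis (G × ℕ) k H, ∀ g n, b (g, n) = ι (of k G g) * z ^ n) :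
    ∃ (Δ : H →ₐ[k] H ⊗[k] H) (ε : H →ₐ[k] k) (S : H →ₐ[k] Hᵐᵒᵖ),
      -- values on the grouplikes and on `z`
      (∀ g : G, Δ (ι (of k G g)) = ι (of k G g) ⊗ₜ[k] ι (of k G g)) ∧
      Δ z = z ⊗ₜ[k] (1 : H) + ι (of k G e) ⊗ₜ[k] z ∧
      (∀ g : G, ε (ι (of k G g)) = 1) ∧
      ε z = 0 ∧
      (∀ g : G, S (ι (of k G g)) = op (ι (of k G g⁻¹))) ∧
      S z = op (-(ι (of k G e⁻¹) * z)) ∧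
      -- coassociativity
      (∀ h : H, (TensorProduct.assoc k H H H)
          ((TensorProduct.map Δ.toLinearMap LinearMap.id) (Δ h))
        = (TensorProduct.map LinearMap.id Δ.toLinearMap) (Δ h)) ∧
      -- counit axioms
      (∀ h : H, (TensorProduct.lid k H) ((TensorProduct.map ε.toLinearMap LinearMap.id) (Δ h)) = h) ∧
      (∀ h : H, (TensorProduct.rid k H) ((TensorProduct.map LinearMap.id ε.toLinearMap) (Δ h)) = h) ∧
      -- antipode axioms
      (∀ h : H, (LinearMap.mul' k H)
          ((TensorProduct.map ((opLinearEquiv k).symm.toLinearMap ∘ₗ S.toLinearMap)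
            LinearMap.id) (Δ h)) = algebraMap k H (ε h)) ∧
      (∀ h : H, (LinearMap.mul' k H)
          ((TensorProduct.map LinearMap.id ((opLinearEquiv k).symm.toLinearMap ∘ₗ S.toLinearMap))
            (Δ h)) = algebraMap k H (ε h)) := by
  obtain ⟨b, hb⟩ := hbasis
  have hgen := adjoin_insert_range_eq_top b hb
  obtain ⟨Δ, hΔg, hΔz⟩ := exists_algHom_of_skewCommutes b hb hrel (skewCommutes_comul he hrel)
  obtain ⟨ε, hεg, hεz⟩ := exists_algHom_of_skewCommutes b hb hrel
    (SkewCommutes.zero (f := Bialgebra.counitAlgHom k (MonoidAlgebra k G)))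
  obtain ⟨S, hSg, hSz⟩ := exists_algHom_of_skewCommutes b hb hrel (skewCommutes_antipode χ he hrel)
  replace hΔg (g : G) : Δ (ι (of k G g)) = ι (of k G g) ⊗ₜ[k] ι (of k G g) :=
    (hΔg g).trans (by simp)
  replace hεg (g : G) : ε (ι (of k G g)) = 1 := (hεg g).trans (by simp)
  replace hSg (g : G) : S (ι (of k G g)) = op (ι (of k G g⁻¹)) := (hSg g).trans (by simp)
  exact ⟨Δ, ε, S, hΔg, hΔz, hεg, hεz, hSg, hSz, coassoc_apply_of_adjoin_eq_top hgen hΔg hΔz,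
    lid_counit_comul_of_adjoin_eq_top hgen hΔg hΔz hεg hεz,
    rid_counit_comul_of_adjoin_eq_top hgen hΔg hΔz hεg hεz,
    mul_antipode_rTensor_comul_of_adjoin_eq_top hgen hΔg hΔz hεg hεz hSg hSz,
    mul_antipode_lTensor_comul_of_adjoin_eq_top hgen hΔg hΔz hεg hεz hSg hSz⟩
end

section
/- Let G be a group, e a central element of G, and τ : G → (k, +) an additive character. Then δ(g) := τ(g)·g·(e − 1) defines a k-linear derivation of the group algebra kG, and the Ore extension H = kG[z; δ] is a Hopf algebra with Δ(z) = z ⊗ 1 + e ⊗ z. -/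
/-!
The derivation is `δ = D · (e - 1)`, where `D g = τ g • g` is a derivation of `kG` because `τ` is
additive, and `e - 1` is central. Since `H` is free over `kG` on the powers of `z`, a pair
`(f, w)` of an algebra map on `kG` and an element `w` with `w * f x = f x * w + f (δ x)`
extends uniquely to an algebra map on `H`. This produces `Δ`, `ε` and `S` from the Hopf structure
of `kG`, with `Δ z = z ⊗ 1 + e ⊗ z`, `ε z = 0` and `S z = -e⁻¹ z`. The Hopf axioms then only have
to be checked on the generators: for coassociativity and counitality both sides are algebra
maps, and since `S` is an anti-homomorphism the elements satisfying an antipode identity form a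
subalgebra.
-/

open scoped TensorProduct
open MonoidAlgebra MulOpposite

universe u

section Derivation
variable {k G : Type*} [CommSemiring k] [Monoid G]

lemma MonoidAlgebra.linearMap_ext_of {N : Type*} [AddCommMonoid N] [Module k N]
    {f f' : MonoidAlgebra k G →ₗ[k] N} (h : ∀ g, f (of k G g) = f' (of k G g)) : f = f' :=
  (MonoidAlgebra.basis G k).ext h

lemma MonoidAlgebra.linearMap₂_ext_of {N : Type*} [AddCommMonoid N] [Module k N]
    {f f' : MonoidAlgebra k G →ₗ[k] MonoidAlgebra k G →ₗ[k] N}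
    (h : ∀ g g', f (of k G g) (of k G g') = f' (of k G g) (of k G g')) : f = f' :=
  (MonoidAlgebra.basis G k).ext fun g => (MonoidAlgebra.basis G k).ext (h g)

@[simp]
lemma MonoidAlgebra.comul_of (g : G) :
    Coalgebra.comul (R := k) (of k G g) = of k G g ⊗ₜ of k G g :=
  (isGroupLikeElem_of g).comul_eq_tmul_self

@[simp]
lemma MonoidAlgebra.counit_of (g : G) :
    Coalgebra.counit (R := k) (of k G g) = 1 :=
  (isGroupLikeElem_of g).counit_eq_one

noncomputable def weightDerivation (τ : G → k) : MonoidAlgebra k G →ₗ[k] MonoidAlgebra k G :=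
  (MonoidAlgebra.basis G k).constr k fun g => τ g • of k G g

@[simp]
lemma weightDerivation_of (τ : G → k) (g : G) :
    weightDerivation τ (of k G g) = τ g • of k G g :=
  (MonoidAlgebra.basis G k).constr_basis k _ g

lemma weightDerivation_mul {τ : G → k} (hτ : ∀ g h, τ (g * h) = τ g + τ h)
    (a b : MonoidAlgebra k G) :
    weightDerivation τ (a * b) = weightDerivation τ a * b + a * weightDerivation τ b := by
  have := MonoidAlgebra.linearMap₂_ext_of (f := (LinearMap.mul k _).compr₂ (weightDerivation τ))
    (f' := (LinearMap.mul k _).compl₁₂ (weightDerivation τ) LinearMap.id +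
      (LinearMap.mul k _).compl₂ (weightDerivation τ)) fun g g' => by
    simp only [LinearMap.compr₂_apply, LinearMap.mul_apply', LinearMap.add_apply,
      LinearMap.compl₁₂_apply, LinearMap.compl₂_apply, LinearMap.id_apply, ← map_mul,
      weightDerivation_of, hτ, add_smul, smul_mul_assoc, mul_smul_comm]
  exact congr($this a b)

end Derivation

lemma leibniz_mul_right {R : Type*} [Ring R] {D : R → R} {c : R}
    (hD : ∀ a b, D (a * b) = D a * b + a * D b) (hc : ∀ a, c * a = a * c) (a b : R) :
    D (a * b) * c = D a * c * b + a * (D b * c) := by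
  rw [hD, add_mul, mul_assoc (D a), ← hc b, mul_assoc, mul_assoc]

section OreExtension
variable {k G H A : Type*} [CommRing k] [Monoid G] [Ring H] [Algebra k H] [Ring A] [Algebra k A]

def SatisfiesOreRel (δ : MonoidAlgebra k G →ₗ[k] MonoidAlgebra k G)
    (f : MonoidAlgebra k G →ₐ[k] A) (w : A) : Prop :=
  ∀ x, w * f x = f x * w + f (δ x)

variable {δ : MonoidAlgebra k G →ₗ[k] MonoidAlgebra k G}

lemma SatisfiesOreRel.of_forall_of {f : MonoidAlgebra k G →ₐ[k] A} {w : A}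
    (h : ∀ g, w * f (of k G g) = f (of k G g) * w + f (δ (of k G g))) :
    SatisfiesOreRel δ f w := fun x =>
  congr($(MonoidAlgebra.linearMap_ext_of (f := LinearMap.mulLeft k w ∘ₗ f.toLinearMap)
    (f' := LinearMap.mulRight k w ∘ₗ f.toLinearMap + f.toLinearMap ∘ₗ δ) h) x)

variable {ι : MonoidAlgebra k G →ₐ[k] H} {z : H} {b : Module.Basis (G × ℕ) k H}

noncomputable def oreLiftLinear (b : Module.Basis (G × ℕ) k H) (f : MonoidAlgebra k G →ₐ[k] A)
    (w : A) : H →ₗ[k] A :=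
  b.constr k fun p => f (of k G p.1) * w ^ p.2

lemma oreLiftLinear_ι_mul_pow (hb : ∀ g n, b (g, n) = ι (of k G g) * z ^ n)
    (f : MonoidAlgebra k G →ₐ[k] A) (w : A) (x : MonoidAlgebra k G) (n : ℕ) :
    oreLiftLinear b f w (ι x * z ^ n) = f x * w ^ n :=
  congr($(MonoidAlgebra.linearMap_ext_of
    (f := oreLiftLinear b f w ∘ₗ (LinearMap.mulRight k (z ^ n) : H →ₗ[k] H) ∘ₗ ι.toLinearMap)
    (f' := (LinearMap.mulRight k (w ^ n) : A →ₗ[k] A) ∘ₗ f.toLinearMap)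
    fun g => by
      simp only [LinearMap.comp_apply, AlgHom.toLinearMap_apply, LinearMap.mulRight_apply, ← hb]
      exact b.constr_basis k _ (g, n)) x)

lemma oreLiftLinear_ι_mul (hb : ∀ g n, b (g, n) = ι (of k G g) * z ^ n)
    (f : MonoidAlgebra k G →ₐ[k] A) (w : A) (x : MonoidAlgebra k G) (h : H) :
    oreLiftLinear b f w (ι x * h) = f x * oreLiftLinear b f w h :=
  congr($(b.ext (f₁ := oreLiftLinear b f w ∘ₗ LinearMap.mulLeft k (ι x))
    (f₂ := LinearMap.mulLeft k (f x) ∘ₗ oreLiftLinear b f w) fun ⟨g, n⟩ => by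
      simp only [LinearMap.comp_apply, LinearMap.mulLeft_apply, hb, ← mul_assoc, ← map_mul,
        oreLiftLinear_ι_mul_pow hb]) h)

lemma oreLiftLinear_z_mul (hb : ∀ g n, b (g, n) = ι (of k G g) * z ^ n)
    (hz : SatisfiesOreRel δ ι z) {f : MonoidAlgebra k G →ₐ[k] A} {w : A}
    (hw : SatisfiesOreRel δ f w) (h : H) :
    oreLiftLinear b f w (z * h) = w * oreLiftLinear b f w h :=
  congr($(b.ext (f₁ := oreLiftLinear b f w ∘ₗ LinearMap.mulLeft k z)
    (f₂ := LinearMap.mulLeft k w ∘ₗ oreLiftLinear b f w) fun ⟨g, n⟩ => by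
      simp only [LinearMap.comp_apply, LinearMap.mulLeft_apply, hb]
      rw [← mul_assoc, hz, add_mul, mul_assoc, ← pow_succ', map_add]
      simp only [oreLiftLinear_ι_mul_pow hb]
      rw [← mul_assoc w, hw, add_mul, mul_assoc, ← pow_succ']) h)

lemma oreLiftLinear_mul (hb : ∀ g n, b (g, n) = ι (of k G g) * z ^ n)
    (hz : SatisfiesOreRel δ ι z) {f : MonoidAlgebra k G →ₐ[k] A} {w : A}
    (hw : SatisfiesOreRel δ f w) (p q : H) :
    oreLiftLinear b f w (p * q) = oreLiftLinear b f w p * oreLiftLinear b f w q := by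
  have hpow : ∀ (g : G) (n : ℕ) (y : H), oreLiftLinear b f w (ι (of k G g) * z ^ n * y) =
      f (of k G g) * w ^ n * oreLiftLinear b f w y := by
    intro g n
    induction n with
    | zero => simpa using oreLiftLinear_ι_mul hb f w (of k G g)
    | succ n ih =>
      intro y
      rw [pow_succ, ← mul_assoc, mul_assoc _ z, ih, oreLiftLinear_z_mul hb hz hw]
      simp only [pow_succ, mul_assoc]
  exact congr($(b.ext (f₁ := oreLiftLinear b f w ∘ₗ LinearMap.mulRight k q)
    (f₂ := LinearMap.mulRight k (oreLiftLinear b f w q) ∘ₗ oreLiftLinear b f w)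
    fun ⟨g, n⟩ => by
      simp only [LinearMap.comp_apply, LinearMap.mulRight_apply, hb, hpow,
        oreLiftLinear_ι_mul_pow hb]) p)

noncomputable def oreLift (hb : ∀ g n, b (g, n) = ι (of k G g) * z ^ n)
    (hz : SatisfiesOreRel δ ι z) (f : MonoidAlgebra k G →ₐ[k] A) (w : A)
    (hw : SatisfiesOreRel δ f w) : H →ₐ[k] A :=
  AlgHom.ofLinearMap (oreLiftLinear b f w)
    (by simpa using oreLiftLinear_ι_mul_pow hb f w 1 0) (oreLiftLinear_mul hb hz hw)

@[simp]
lemma oreLift_ι (hb : ∀ g n, b (g, n) = ι (of k G g) * z ^ n)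
    (hz : SatisfiesOreRel δ ι z) (f : MonoidAlgebra k G →ₐ[k] A) (w : A)
    (hw : SatisfiesOreRel δ f w) (x : MonoidAlgebra k G) : oreLift hb hz f w hw (ι x) = f x := by
  simpa [oreLift] using oreLiftLinear_ι_mul_pow hb f w x 0

@[simp]
lemma oreLift_z (hb : ∀ g n, b (g, n) = ι (of k G g) * z ^ n)
    (hz : SatisfiesOreRel δ ι z) (f : MonoidAlgebra k G →ₐ[k] A) (w : A)
    (hw : SatisfiesOreRel δ f w) : oreLift hb hz f w hw z = w := by
  simpa [oreLift] using oreLiftLinear_ι_mul_pow hb f w 1 1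

lemma Subalgebra.eq_top_of_generators_mem (hb : ∀ g n, b (g, n) = ι (of k G g) * z ^ n)
    {T : Subalgebra k H} (hι : ∀ g, ι (of k G g) ∈ T) (hzT : z ∈ T) : T = ⊤ := by
  refine Subalgebra.toSubmodule_injective (eq_top_iff.2 ?_)
  rw [← b.span_eq, Submodule.span_le]
  rintro _ ⟨⟨g, n⟩, rfl⟩
  rw [hb]
  exact T.mul_mem (hι g) (T.pow_mem hzT n)

lemma algHom_ext_of_basis (hb : ∀ g n, b (g, n) = ι (of k G g) * z ^ n) {ψ ψ' : H →ₐ[k] A}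
    (hι : ∀ g, ψ (ι (of k G g)) = ψ' (ι (of k G g))) (hz : ψ z = ψ' z) : ψ = ψ' :=
  AlgHom.ext fun h => by
    rw [← AlgHom.mem_equalizer, Subalgebra.eq_top_of_generators_mem hb (T := AlgHom.equalizer ψ ψ')
      hι hz]
    trivial

end OreExtension

section SkewPrimitive
variable {k G H : Type*} [CommRing k] [Group G] [Ring H] [Algebra k H]

noncomputable def oreDerivation (e : G) (τ : G → k) :
    MonoidAlgebra k G →ₗ[k] MonoidAlgebra k G :=
  LinearMap.mulRight k (of k G e - 1) ∘ₗ weightDerivation τ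

lemma oreDerivation_of (e : G) (τ : G → k) (g : G) :
    oreDerivation e τ (of k G g) = τ g • (of k G g * (of k G e - 1)) := by
  simp only [oreDerivation, LinearMap.comp_apply, weightDerivation_of, LinearMap.mulRight_apply,
    smul_mul_assoc]

lemma oreDerivation_mul {e : G} (he : ∀ g, e * g = g * e) {τ : G → k}
    (hτ : ∀ g h, τ (g * h) = τ g + τ h) (a b : MonoidAlgebra k G) :
    oreDerivation e τ (a * b) = oreDerivation e τ a * b + a * oreDerivation e τ b :=
  leibniz_mul_right (weightDerivation_mul hτ) (fun x => by
    simpa [sub_mul, mul_sub] using (MonoidAlgebra.of_commute (fun g => he g) x).eq) a b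

variable {e : G} {τ : G → k} {ι : MonoidAlgebra k G →ₐ[k] H} {z : H}

lemma satisfiesOreRel_oreDerivation
    (hrel : ∀ g, z * ι (of k G g) = ι (of k G g) * z + τ g • (ι (of k G g) * (ι (of k G e) - 1))) :
    SatisfiesOreRel (oreDerivation e τ) ι z :=
  .of_forall_of fun g => by simp only [hrel, oreDerivation_of, map_smul, map_mul, map_sub, map_one]

lemma satisfiesOreRel_comul (he : ∀ g, e * g = g * e)
    (hrel : ∀ g, z * ι (of k G g) = ι (of k G g) * z + τ g • (ι (of k G g) * (ι (of k G e) - 1))) :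
    SatisfiesOreRel (oreDerivation e τ)
      ((Algebra.TensorProduct.map ι ι).comp (Bialgebra.comulAlgHom k (MonoidAlgebra k G)))
      (z ⊗ₜ 1 + ι (of k G e) ⊗ₜ z) :=
  .of_forall_of fun g => by
    have hcomm : ι (of k G e) * ι (of k G g) = ι (of k G g) * ι (of k G e) := by
      simp only [← map_mul, he]
    simp only [AlgHom.comp_apply, Bialgebra.comulAlgHom_apply, oreDerivation_of, map_smul,
      map_mul, map_sub, map_one, comul_of,
      Algebra.TensorProduct.map_tmul, Algebra.TensorProduct.one_def]
    simp only [add_mul, mul_add, mul_sub, Algebra.TensorProduct.tmul_mul_tmul, one_mul, mul_one,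
      hrel, hcomm]
    simp only [TensorProduct.add_tmul, TensorProduct.tmul_add,
      TensorProduct.smul_tmul', TensorProduct.tmul_smul, TensorProduct.sub_tmul,
      TensorProduct.tmul_sub, smul_sub]
    module

lemma satisfiesOreRel_counit :
    SatisfiesOreRel (oreDerivation e τ) (Bialgebra.counitAlgHom k (MonoidAlgebra k G)) 0 :=
  .of_forall_of fun g => by simp [oreDerivation_of, -of_apply]

noncomputable def opInvLift (ι : MonoidAlgebra k G →ₐ[k] H) : MonoidAlgebra k G →ₐ[k] Hᵐᵒᵖ :=
  MonoidAlgebra.lift k Hᵐᵒᵖ G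
    ((MonoidHom.op (ι.toMonoidHom.comp (of k G))).comp (MulEquiv.inv' G).toMonoidHom)

@[simp]
lemma opInvLift_of (g : G) : opInvLift ι (of k G g) = op (ι (of k G g⁻¹)) := by
  simp [opInvLift]

lemma satisfiesOreRel_opInvLift (he : ∀ g, e * g = g * e) (hτ : ∀ g h, τ (g * h) = τ g + τ h)
    (hrel : ∀ g, z * ι (of k G g) = ι (of k G g) * z + τ g • (ι (of k G g) * (ι (of k G e) - 1))) :
    SatisfiesOreRel (oreDerivation e τ) (opInvLift ι) (op (-(ι (of k G e⁻¹) * z))) :=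
  .of_forall_of fun g => by
    have hinv : e⁻¹ * g⁻¹ = g⁻¹ * e⁻¹ := by rw [← mul_inv_rev, ← he, mul_inv_rev]
    have hτinv : τ g⁻¹ = -τ g := by
      have h1 : τ 1 = 0 := by simpa using hτ 1 1
      rw [eq_neg_iff_add_eq_zero, ← hτ, inv_mul_cancel, h1]
    simp only [oreDerivation_of, map_smul, map_mul, map_sub, map_one, opInvLift_of]
    apply MulOpposite.unop_injective
    simp only [unop_mul, unop_op, unop_add, unop_smul, unop_sub, unop_one]
    rw [neg_mul, mul_assoc, hrel, hτinv]
    simp only [mul_add, mul_sub, mul_neg, sub_mul, mul_smul_comm, one_mul, mul_one, ← mul_assoc,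
      ← map_mul, hinv, inv_mul_cancel_right]
    module

end SkewPrimitive

section Antipode
variable {k A : Type*} [CommRing k] [Ring A] [Algebra k A] (S : A →ₐ[k] Aᵐᵒᵖ)

noncomputable def mulRTensor : A ⊗[k] A →ₗ[k] A :=
  LinearMap.mul' k A ∘ₗ
    TensorProduct.map ((opLinearEquiv k).symm.toLinearMap ∘ₗ S.toLinearMap) LinearMap.id

noncomputable def mulLTensor : A ⊗[k] A →ₗ[k] A :=
  LinearMap.mul' k A ∘ₗ
    TensorProduct.map LinearMap.id ((opLinearEquiv k).symm.toLinearMap ∘ₗ S.toLinearMap)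

@[simp]
lemma mulRTensor_tmul (x y : A) : mulRTensor S (x ⊗ₜ y) = unop (S x) * y := rfl

@[simp]
lemma mulLTensor_tmul (x y : A) : mulLTensor S (x ⊗ₜ y) = x * unop (S y) := rfl

lemma mulRTensor_mul_tmul (u : A ⊗[k] A) (x y : A) :
    mulRTensor S (u * x ⊗ₜ y) = unop (S x) * mulRTensor S u * y := by
  induction u using TensorProduct.induction_on with
  | zero => simp
  | tmul p q => simp [mul_assoc]
  | add u v hu hv => simp only [add_mul, map_add, hu, hv, mul_add]

lemma mulLTensor_tmul_mul (v : A ⊗[k] A) (x y : A) :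
    mulLTensor S (x ⊗ₜ y * v) = x * mulLTensor S v * unop (S y) := by
  induction v using TensorProduct.induction_on with
  | zero => simp
  | tmul p q => simp [mul_assoc]
  | add p q hp hq => simp only [mul_add, map_add, hp, hq, add_mul]

lemma mulRTensor_mul_of_eq_algebraMap {u : A ⊗[k] A} {c : k}
    (hu : mulRTensor S u = algebraMap k A c) (v : A ⊗[k] A) :
    mulRTensor S (u * v) = c • mulRTensor S v := by
  induction v using TensorProduct.induction_on with
  | zero => simp
  | tmul x y => simp [mulRTensor_mul_tmul, hu, Algebra.smul_def, Algebra.commutes, mul_assoc]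
  | add v w hv hw => simp only [mul_add, map_add, hv, hw, smul_add]

lemma mulLTensor_mul_of_eq_algebraMap {v : A ⊗[k] A} {c : k}
    (hv : mulLTensor S v = algebraMap k A c) (u : A ⊗[k] A) :
    mulLTensor S (u * v) = c • mulLTensor S u := by
  induction u using TensorProduct.induction_on with
  | zero => simp
  | tmul x y => simp [mulLTensor_tmul_mul, hv, Algebra.smul_def, Algebra.commutes, mul_assoc]
  | add u w hu hw => simp only [add_mul, map_add, hu, hw, smul_add]

variable (Δ : A →ₐ[k] A ⊗[k] A) (ε : A →ₐ[k] k)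

noncomputable def leftAntipodeSubalgebra : Subalgebra k A :=
  (LinearMap.eqLocus (mulRTensor S ∘ₗ Δ.toLinearMap)
    (Algebra.linearMap k A ∘ₗ ε.toLinearMap)).toSubalgebra
    (by simp [Algebra.TensorProduct.one_def])
    (fun {a c} ha hc => by
      simp only [LinearMap.mem_eqLocus, LinearMap.comp_apply, AlgHom.toLinearMap_apply,
        Algebra.linearMap_apply] at ha hc ⊢
      rw [map_mul, mulRTensor_mul_of_eq_algebraMap S ha, hc, map_mul, map_mul, Algebra.smul_def])

noncomputable def rightAntipodeSubalgebra : Subalgebra k A :=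
  (LinearMap.eqLocus (mulLTensor S ∘ₗ Δ.toLinearMap)
    (Algebra.linearMap k A ∘ₗ ε.toLinearMap)).toSubalgebra
    (by simp [Algebra.TensorProduct.one_def])
    (fun {a c} ha hc => by
      simp only [LinearMap.mem_eqLocus, LinearMap.comp_apply, AlgHom.toLinearMap_apply,
        Algebra.linearMap_apply] at ha hc ⊢
      rw [map_mul, mulLTensor_mul_of_eq_algebraMap S hc, ha, map_mul, map_mul, Algebra.smul_def,
        Algebra.commutes])

variable {S Δ ε}

lemma mem_leftAntipodeSubalgebra {a : A} :
    a ∈ leftAntipodeSubalgebra S Δ ε ↔ mulRTensor S (Δ a) = algebraMap k A (ε a) := Iff.rfl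

lemma mem_rightAntipodeSubalgebra {a : A} :
    a ∈ rightAntipodeSubalgebra S Δ ε ↔ mulLTensor S (Δ a) = algebraMap k A (ε a) := Iff.rfl

end Antipode

section HopfAxioms
variable {k G H : Type*} [CommRing k] [Group G] [Ring H] [Algebra k H]
  {ι : MonoidAlgebra k G →ₐ[k] H} {z : H} {b : Module.Basis (G × ℕ) k H} {e : G}
  {Δ : H →ₐ[k] H ⊗[k] H} {ε : H →ₐ[k] k} {S : H →ₐ[k] Hᵐᵒᵖ}

lemma coassoc_of_generators (hb : ∀ g n, b (g, n) = ι (of k G g) * z ^ n)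
    (hΔι : ∀ g, Δ (ι (of k G g)) = ι (of k G g) ⊗ₜ ι (of k G g))
    (hΔz : Δ z = z ⊗ₜ 1 + ι (of k G e) ⊗ₜ z) (h : H) :
    TensorProduct.assoc k H H H (TensorProduct.map Δ.toLinearMap LinearMap.id (Δ h)) =
      TensorProduct.map LinearMap.id Δ.toLinearMap (Δ h) :=
  congr($(algHom_ext_of_basis hb
    (ψ := (Algebra.TensorProduct.assoc k k k H H H).toAlgHom.comp
      ((Algebra.TensorProduct.map Δ (AlgHom.id k H)).comp Δ))
    (ψ' := (Algebra.TensorProduct.map (AlgHom.id k H) Δ).comp Δ)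
    (fun g => by simp [hΔι, -of_apply])
    (by simp [hΔz, hΔι, TensorProduct.add_tmul, TensorProduct.tmul_add,
      Algebra.TensorProduct.one_def, add_assoc, -of_apply])) h)

lemma lid_counit_of_generators (hb : ∀ g n, b (g, n) = ι (of k G g) * z ^ n)
    (hΔι : ∀ g, Δ (ι (of k G g)) = ι (of k G g) ⊗ₜ ι (of k G g))
    (hΔz : Δ z = z ⊗ₜ 1 + ι (of k G e) ⊗ₜ z) (hει : ∀ g, ε (ι (of k G g)) = 1) (hεz : ε z = 0)
    (h : H) : TensorProduct.lid k H (TensorProduct.map ε.toLinearMap LinearMap.id (Δ h)) = h :=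
  congr($(algHom_ext_of_basis hb
    (ψ := (Algebra.TensorProduct.lid k H).toAlgHom.comp
      ((Algebra.TensorProduct.map ε (AlgHom.id k H)).comp Δ))
    (ψ' := AlgHom.id k H)
    (fun g => by simp [hΔι, hει, -of_apply])
    (by simp [hΔz, hει, hεz, -of_apply])) h)

lemma rid_counit_of_generators (hb : ∀ g n, b (g, n) = ι (of k G g) * z ^ n)
    (hΔι : ∀ g, Δ (ι (of k G g)) = ι (of k G g) ⊗ₜ ι (of k G g))
    (hΔz : Δ z = z ⊗ₜ 1 + ι (of k G e) ⊗ₜ z) (hει : ∀ g, ε (ι (of k G g)) = 1) (hεz : ε z = 0)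
    (h : H) : TensorProduct.rid k H (TensorProduct.map LinearMap.id ε.toLinearMap (Δ h)) = h :=
  congr($(algHom_ext_of_basis hb
    (ψ := (Algebra.TensorProduct.rid k k H).toAlgHom.comp
      ((Algebra.TensorProduct.map (AlgHom.id k H) ε).comp Δ))
    (ψ' := AlgHom.id k H)
    (fun g => by simp [hΔι, hει, -of_apply])
    (by simp [hΔz, hεz, -of_apply])) h)

lemma mulRTensor_comul_of_generators (hb : ∀ g n, b (g, n) = ι (of k G g) * z ^ n)
    (hΔι : ∀ g, Δ (ι (of k G g)) = ι (of k G g) ⊗ₜ ι (of k G g))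
    (hΔz : Δ z = z ⊗ₜ 1 + ι (of k G e) ⊗ₜ z) (hει : ∀ g, ε (ι (of k G g)) = 1) (hεz : ε z = 0)
    (hSι : ∀ g, S (ι (of k G g)) = op (ι (of k G g⁻¹))) (hSz : S z = op (-(ι (of k G e⁻¹) * z)))
    (h : H) : mulRTensor S (Δ h) = algebraMap k H (ε h) := by
  have htop : leftAntipodeSubalgebra S Δ ε = ⊤ := Subalgebra.eq_top_of_generators_mem hb
    (fun g => by rw [mem_leftAntipodeSubalgebra]; simp [hΔι, hει, hSι, ← map_mul, -of_apply])
    (by rw [mem_leftAntipodeSubalgebra]; simp [hΔz, hεz, hSι, hSz, -of_apply])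
  exact mem_leftAntipodeSubalgebra.1 (htop ▸ Algebra.mem_top)

lemma mulLTensor_comul_of_generators (hb : ∀ g n, b (g, n) = ι (of k G g) * z ^ n)
    (hΔι : ∀ g, Δ (ι (of k G g)) = ι (of k G g) ⊗ₜ ι (of k G g))
    (hΔz : Δ z = z ⊗ₜ 1 + ι (of k G e) ⊗ₜ z) (hει : ∀ g, ε (ι (of k G g)) = 1) (hεz : ε z = 0)
    (hSι : ∀ g, S (ι (of k G g)) = op (ι (of k G g⁻¹))) (hSz : S z = op (-(ι (of k G e⁻¹) * z)))
    (h : H) : mulLTensor S (Δ h) = algebraMap k H (ε h) := by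
  have htop : rightAntipodeSubalgebra S Δ ε = ⊤ := Subalgebra.eq_top_of_generators_mem hb
    (fun g => by rw [mem_rightAntipodeSubalgebra]; simp [hΔι, hει, hSι, ← map_mul, -of_apply])
    (by rw [mem_rightAntipodeSubalgebra]; simp [hΔz, hεz, hSz, ← mul_assoc, ← map_mul, -of_apply])
  exact mem_rightAntipodeSubalgebra.1 (htop ▸ Algebra.mem_top)

end HopfAxioms

theorem stmt15_general {k : Type u} [Field k] {G : Type u} [Group G]
    (e : G) (he : ∀ g : G, e * g = g * e)
    (τ : G → k) (hτ : ∀ g h : G, τ (g * h) = τ g + τ h)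
    (H : Type u) [Ring H] [Algebra k H]
    (ι : MonoidAlgebra k G →ₐ[k] H) (z : H)
    (hrel : ∀ g : G, z * ι (of k G g) =
      ι (of k G g) * z + τ g • (ι (of k G g) * (ι (of k G e) - 1)))
    (hbasis : ∃ b : Module.Basis (G × ℕ) k H, ∀ g n, b (g, n) = ι (of k G g) * z ^ n) :
    -- `δ` is a `k`-linear derivation of `kG`
    (∃ δ : MonoidAlgebra k G →ₗ[k] MonoidAlgebra k G,
      (∀ a b : MonoidAlgebra k G, δ (a * b) = δ a * b + a * δ b) ∧
      (∀ g : G, δ (of k G g) = τ g • (of k G g * (of k G e - 1)))) ∧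
    -- and `H` is a Hopf algebra with `z` `(1, e)`-skew primitive
    ∃ (Δ : H →ₐ[k] H ⊗[k] H) (ε : H →ₐ[k] k) (S : H →ₐ[k] Hᵐᵒᵖ),
      (∀ g : G, Δ (ι (of k G g)) = ι (of k G g) ⊗ₜ[k] ι (of k G g)) ∧
      Δ z = z ⊗ₜ[k] (1 : H) + ι (of k G e) ⊗ₜ[k] z ∧
      (∀ g : G, ε (ι (of k G g)) = 1) ∧
      ε z = 0 ∧
      (∀ g : G, S (ι (of k G g)) = op (ι (of k G g⁻¹))) ∧
      (∀ h : H, (TensorProduct.assoc k H H H)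
          ((TensorProduct.map Δ.toLinearMap LinearMap.id) (Δ h))
        = (TensorProduct.map LinearMap.id Δ.toLinearMap) (Δ h)) ∧
      (∀ h : H, (TensorProduct.lid k H) ((TensorProduct.map ε.toLinearMap LinearMap.id) (Δ h)) = h) ∧
      (∀ h : H, (TensorProduct.rid k H) ((TensorProduct.map LinearMap.id ε.toLinearMap) (Δ h)) = h) ∧
      (∀ h : H, (LinearMap.mul' k H)
          ((TensorProduct.map ((opLinearEquiv k).symm.toLinearMap ∘ₗ S.toLinearMap)
            LinearMap.id) (Δ h)) = algebraMap k H (ε h)) ∧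
      (∀ h : H, (LinearMap.mul' k H)
          ((TensorProduct.map LinearMap.id ((opLinearEquiv k).symm.toLinearMap ∘ₗ S.toLinearMap))
            (Δ h)) = algebraMap k H (ε h)) := by
  obtain ⟨b, hb⟩ := hbasis
  have hz := satisfiesOreRel_oreDerivation hrel
  set Δ := oreLift hb hz _ _ (satisfiesOreRel_comul he hrel)
  set ε := oreLift hb hz _ _ satisfiesOreRel_counit
  set S := oreLift hb hz _ _ (satisfiesOreRel_opInvLift he hτ hrel)
  have hΔι : ∀ g, Δ (ι (of k G g)) = ι (of k G g) ⊗ₜ ι (of k G g) := fun g => by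
    simp [Δ, -of_apply]
  have hΔz : Δ z = z ⊗ₜ 1 + ι (of k G e) ⊗ₜ z := oreLift_z ..
  have hει : ∀ g, ε (ι (of k G g)) = 1 := fun g => by
    simp [ε, -of_apply]
  have hεz : ε z = 0 := oreLift_z ..
  have hSι : ∀ g, S (ι (of k G g)) = op (ι (of k G g⁻¹)) := fun g => by simp [S, -of_apply]
  have hSz : S z = op (-(ι (of k G e⁻¹) * z)) := oreLift_z ..
  exact ⟨⟨oreDerivation e τ, oreDerivation_mul he hτ, oreDerivation_of e τ⟩, Δ, ε, S,
    hΔι, hΔz, hει, hεz, hSι, coassoc_of_generators hb hΔι hΔz,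
    lid_counit_of_generators hb hΔι hΔz hει hεz, rid_counit_of_generators hb hΔι hΔz hει hεz,
    mulRTensor_comul_of_generators hb hΔι hΔz hει hεz hSι hSz,
    mulLTensor_comul_of_generators hb hΔι hΔz hει hεz hSι hSz⟩

/-- Let `e` be central in a group `G` and `τ : G → (k, +)` an additive character.  Then
`δ(g) := τ(g)·g·(e - 1)` defines a `k`-linear derivation of the group algebra `kG`, and
the Ore extension `H = kG[z; δ]` (i.e. `H` contains `kG`, has the commutation rule
`z·g = g·z + δ(g)`, and is free over `kG` with basis the powers of `z`) is a Hopf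
algebra extending the Hopf structure of `kG`, with `Δ(z) = z ⊗ 1 + e ⊗ z`. -/
theorem stmt15 {k : Type u} [Field k] [CharZero k] {G : Type u} [Group G]
    (e : G) (he : ∀ g : G, e * g = g * e)
    (τ : G → k) (hτ : ∀ g h : G, τ (g * h) = τ g + τ h)
    (H : Type u) [Ring H] [Algebra k H]
    (ι : MonoidAlgebra k G →ₐ[k] H) (z : H)
    (hrel : ∀ g : G, z * ι (of k G g) =
      ι (of k G g) * z + τ g • (ι (of k G g) * (ι (of k G e) - 1)))
    (hbasis : ∃ b : Module.Basis (G × ℕ) k H, ∀ g n, b (g, n) = ι (of k G g) * z ^ n) :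
    -- `δ` is a `k`-linear derivation of `kG`
    (∃ δ : MonoidAlgebra k G →ₗ[k] MonoidAlgebra k G,
      (∀ a b : MonoidAlgebra k G, δ (a * b) = δ a * b + a * δ b) ∧
      (∀ g : G, δ (of k G g) = τ g • (of k G g * (of k G e - 1)))) ∧
    -- and `H` is a Hopf algebra with `z` `(1, e)`-skew primitive
    ∃ (Δ : H →ₐ[k] H ⊗[k] H) (ε : H →ₐ[k] k) (S : H →ₐ[k] Hᵐᵒᵖ),
      (∀ g : G, Δ (ι (of k G g)) = ι (of k G g) ⊗ₜ[k] ι (of k G g)) ∧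
      Δ z = z ⊗ₜ[k] (1 : H) + ι (of k G e) ⊗ₜ[k] z ∧
      (∀ g : G, ε (ι (of k G g)) = 1) ∧
      ε z = 0 ∧
      (∀ g : G, S (ι (of k G g)) = op (ι (of k G g⁻¹))) ∧
      (∀ h : H, (TensorProduct.assoc k H H H)
          ((TensorProduct.map Δ.toLinearMap LinearMap.id) (Δ h))
        = (TensorProduct.map LinearMap.id Δ.toLinearMap) (Δ h)) ∧
      (∀ h : H, (TensorProduct.lid k H) ((TensorProduct.map ε.toLinearMap LinearMap.id) (Δ h)) = h) ∧
      (∀ h : H, (TensorProduct.rid k H) ((TensorProduct.map LinearMap.id ε.toLinearMap) (Δ h)) = h) ∧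
      (∀ h : H, (LinearMap.mul' k H)
          ((TensorProduct.map ((opLinearEquiv k).symm.toLinearMap ∘ₗ S.toLinearMap)
            LinearMap.id) (Δ h)) = algebraMap k H (ε h)) ∧
      (∀ h : H, (LinearMap.mul' k H)
          ((TensorProduct.map LinearMap.id ((opLinearEquiv k).symm.toLinearMap ∘ₗ S.toLinearMap))
            (Δ h)) = algebraMap k H (ε h)) :=
  stmt15_general e he τ hτ H ι z hrel hbasis
end

section
/- Let H be a Hopf algebra over a field k. The set L of locally affine elements of H (elements contained in some affine, i.e. finitely generated, Hopf subalgebra of H) is a Hopf subalgebra of H, and L is a directed union of affine Hopf subalgebras. -/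
/-!
A subalgebra `K` is a Hopf subalgebra exactly when `K ≤ Δ⁻¹(K ⊗ K)` and `K ≤ S⁻¹(K)`. Both right
hand sides are monotone in `K`, so any supremum of Hopf subalgebras is again one. In particular the
affine Hopf subalgebras are closed under `⊔` and form a directed family; its supremum is therefore
their union, which is the set of locally affine elements, and a finite subset of a directed union
already lies in one member.
-/

open scoped TensorProduct
open Bialgebra HopfAlgebra

/-- A subalgebra `K` of a Hopf algebra `H` is a Hopf subalgebra if it is stable under
the comultiplication (`Δ(K) ⊆ K ⊗ K`) and under the antipode. -/
def IsHopfSubalgebra {k : Type u} [CommRing k] {H : Type v} [Ring H] [HopfAlgebra k H]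
    (K : Subalgebra k H) : Prop :=
  (∀ x ∈ K, Coalgebra.comul (R := k) x ∈
      Submodule.span k {t : H ⊗[k] H | ∃ a ∈ K, ∃ b ∈ K, t = a ⊗ₜ[k] b}) ∧
  (∀ x ∈ K, HopfAlgebra.antipode (R := k) x ∈ K)

namespace Subalgebra

variable {k H : Type*} [CommRing k] [Ring H] [Algebra k H]

def tensorSquare (K : Subalgebra k H) : Subalgebra k (H ⊗[k] H) :=
  (Algebra.TensorProduct.map K.val K.val).range

lemma mem_tensorSquare {K : Subalgebra k H} {t : H ⊗[k] H} :
    t ∈ K.tensorSquare ↔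
      t ∈ Submodule.span k {t : H ⊗[k] H | ∃ a ∈ K, ∃ b ∈ K, t = a ⊗ₜ[k] b} := by
  change t ∈ LinearMap.range (TensorProduct.map K.val.toLinearMap K.val.toLinearMap) ↔ _
  rw [TensorProduct.range_map_eq_span_tmul]
  congr! 3 with t
  simp [eq_comm]

lemma tensorSquare_mono {K K' : Subalgebra k H} (h : K ≤ K') :
    K.tensorSquare ≤ K'.tensorSquare := by
  rintro _ ⟨t, rfl⟩
  refine ⟨Algebra.TensorProduct.map (inclusion h) (inclusion h) t, ?_⟩
  change (Algebra.TensorProduct.map K'.val K'.val) _ = Algebra.TensorProduct.map K.val K.val t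
  rw [← AlgHom.comp_apply, ← Algebra.TensorProduct.map_comp]
  rfl

end Subalgebra

section HopfSubalgebra

open Subalgebra

variable {k H : Type*} [CommRing k] [Ring H] [HopfAlgebra k H]

lemma isHopfSubalgebra_iff_le_comap (K : Subalgebra k H) :
    IsHopfSubalgebra K ↔
      K ≤ K.tensorSquare.comap (comulAlgHom k H) ∧ K ≤ K.op.comap (antipodeAlgHomOp k H) := by
  simp only [IsHopfSubalgebra, SetLike.le_def, mem_comap, mem_tensorSquare, comulAlgHom_apply,
    antipodeAlgHomOp_apply, mem_op]
  rfl

lemma isHopfSubalgebra_iSup {ι : Sort*} {K : ι → Subalgebra k H}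
    (hK : ∀ i, IsHopfSubalgebra (K i)) : IsHopfSubalgebra (⨆ i, K i) := by
  refine (isHopfSubalgebra_iff_le_comap _).2 ⟨iSup_le fun i => ?_, iSup_le fun i => ?_⟩
  · exact ((isHopfSubalgebra_iff_le_comap _).1 (hK i)).1.trans
      ((gc_map_comap _).monotone_u (tensorSquare_mono (le_iSup K i)))
  · exact ((isHopfSubalgebra_iff_le_comap _).1 (hK i)).2.trans
      ((gc_map_comap _).monotone_u (op_le_op_iff.2 (le_iSup K i)))

lemma IsHopfSubalgebra.sup {K₁ K₂ : Subalgebra k H} (h₁ : IsHopfSubalgebra K₁)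
    (h₂ : IsHopfSubalgebra K₂) : IsHopfSubalgebra (K₁ ⊔ K₂) := by
  rw [sup_eq_iSup]
  exact isHopfSubalgebra_iSup fun b => by cases b <;> assumption

lemma isHopfSubalgebra_bot : IsHopfSubalgebra (⊥ : Subalgebra k H) :=
  (isHopfSubalgebra_iff_le_comap _).2 ⟨bot_le, bot_le⟩

end HopfSubalgebra

/-- The set of locally affine elements of a Hopf algebra `H` (elements lying in some
affine Hopf subalgebra) is itself a Hopf subalgebra of `H`, and it is a directed union
of affine Hopf subalgebras. -/
theorem stmt17 {k : Type u} [Field k] {H : Type v} [Ring H] [HopfAlgebra k H]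
    (L : Set H)
    (hL : L = {h : H | ∃ K : Subalgebra k H, IsHopfSubalgebra K ∧ K.FG ∧ h ∈ K}) :
    ∃ KL : Subalgebra k H, (KL : Set H) = L ∧ IsHopfSubalgebra KL ∧
      ∀ s : Finset H, ↑s ⊆ L →
        ∃ Ω : Subalgebra k H, IsHopfSubalgebra Ω ∧ Ω.FG ∧ ↑s ⊆ (Ω : Set H) ∧ Ω ≤ KL := by
  let Affine := {K : Subalgebra k H // IsHopfSubalgebra K ∧ K.FG}
  have : Nonempty Affine := ⟨⟨⊥, isHopfSubalgebra_bot, Subalgebra.fg_bot⟩⟩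
  have hdir : Directed (· ≤ ·) (Subtype.val : Affine → Subalgebra k H) := fun K₁ K₂ =>
    ⟨⟨K₁.1 ⊔ K₂.1, K₁.2.1.sup K₂.2.1, K₁.2.2.sup K₂.2.2⟩, le_sup_left, le_sup_right⟩
  have hL' : L = ⋃ K : Affine, (K.1 : Set H) := by
    subst hL; ext; simp [Affine, and_assoc]
  refine ⟨⨆ K : Affine, K.1, ?_, isHopfSubalgebra_iSup fun K => K.2.1, fun s hs => ?_⟩
  · rw [Subalgebra.coe_iSup_of_directed hdir, hL']
  · have hdir' : Directed (· ⊆ ·) fun K : Affine => (K.1 : Set H) :=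
      hdir.mono_comp _ fun _ _ h => SetLike.coe_subset_coe.2 h
    obtain ⟨K, hsK⟩ := hdir'.exists_mem_subset_of_finset_subset_biUnion (hL' ▸ hs)
    exact ⟨K.1, K.2.1, K.2.2, hsK, le_iSup Subtype.val K⟩
end

section
/- Let H be a Hopf algebra whose antipode S has finite order, and suppose every element of H lies in a finite-dimensional subcoalgebra of H. Then H is locally affine: every finite subset of H is contained in an affine Hopf subalgebra. -/
/-!
Gather the finite set into a finite-dimensional subcoalgebra `W`. The antipode is an
anti-coalgebra map, `Δ ∘ S = (S ⊗ S) ∘ τ ∘ Δ`, so every `Sⁱ(W)` is a subcoalgebra; as `S` has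
finite order, only finitely many of them occur, and `X = Σᵢ Sⁱ(W)` is a finite-dimensional
subcoalgebra with `S(X) ⊆ X`. The subalgebra generated by `X` is finitely generated, and it is
stable under `Δ` (an algebra map) and under `S` (an anti-algebra map) because its generators are.
-/

open scoped TensorProduct

/-- A submodule `C` of a Hopf algebra `H` is a subcoalgebra if `Δ(C) ⊆ C ⊗ C`. -/
def IsSubcoalgebra {k : Type u} [CommRing k] {H : Type v} [Ring H] [HopfAlgebra k H]
    (C : Submodule k H) : Prop :=
  ∀ x ∈ C, Coalgebra.comul (R := k) x ∈
    Submodule.span k {t : H ⊗[k] H | ∃ a ∈ C, ∃ b ∈ C, t = a ⊗ₜ[k] b}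

open Coalgebra TensorProduct WithConv

namespace LinearMap

variable {R C A B : Type*} [CommSemiring R] [AddCommMonoid C] [Module R C]
  [Semiring A] [Algebra R A] [Semiring B] [Algebra R B]

section CoalgebraStruct

variable [CoalgebraStruct R C]

theorem includeLeft_convMul_includeRight (f : C →ₗ[R] A) (g : C →ₗ[R] B) :
    toConv ((Algebra.TensorProduct.includeLeft : A →ₐ[R] A ⊗[R] B).toLinearMap ∘ₗ f) *
      toConv (Algebra.TensorProduct.includeRight.toLinearMap ∘ₗ g) =
      toConv (map f g ∘ₗ comul) := by
  have : mul' R (A ⊗[R] B) ∘ₗ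
      map (Algebra.TensorProduct.includeLeft.toLinearMap ∘ₗ f)
        (Algebra.TensorProduct.includeRight.toLinearMap ∘ₗ g) = map f g :=
    TensorProduct.ext' fun x y ↦ by simp
  rw [convMul_def, ofConv_toConv, ofConv_toConv, ← comp_assoc, this]

theorem includeRight_convMul_includeLeft (f : C →ₗ[R] A) (g : C →ₗ[R] B) :
    toConv (Algebra.TensorProduct.includeRight.toLinearMap ∘ₗ g) *
      toConv ((Algebra.TensorProduct.includeLeft : A →ₐ[R] A ⊗[R] B).toLinearMap ∘ₗ f) =
      toConv (map f g ∘ₗ (TensorProduct.comm R C C).toLinearMap ∘ₗ comul) := by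
  have : mul' R (A ⊗[R] B) ∘ₗ
      map (Algebra.TensorProduct.includeRight.toLinearMap ∘ₗ g)
        (Algebra.TensorProduct.includeLeft.toLinearMap ∘ₗ f) =
      map f g ∘ₗ (TensorProduct.comm R C C).toLinearMap :=
    TensorProduct.ext' fun x y ↦ by simp
  rw [convMul_def, ofConv_toConv, ofConv_toConv, ← comp_assoc, this, comp_assoc]

end CoalgebraStruct

theorem algHom_comp_convMul_eq_one [Coalgebra R C] (φ : A →ₐ[R] B) {f g : C →ₗ[R] A}
    (h : toConv f * toConv g = 1) :
    toConv (φ.toLinearMap ∘ₗ f) * toConv (φ.toLinearMap ∘ₗ g) = 1 := by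
  apply WithConv.ext
  rw [← algHom_comp_convMul_distrib φ (toConv f) (toConv g), h]
  ext
  simp

end LinearMap

namespace HopfAlgebra

variable {R H : Type*} [CommSemiring R] [Semiring H] [HopfAlgebra R H]

/-- In the convolution algebra `Hom(H, H ⊗ H)`, with `ι₁ a = a ⊗ 1` and `ι₂ a = 1 ⊗ a`, we have
`Δ = ι₁ * ι₂` and `(S ⊗ S) ∘ τ ∘ Δ = ι₂ S * ι₁ S`, a left inverse of `Δ`; and `Δ ∘ S` is a right
inverse of `Δ`. -/
theorem comul_comp_antipode :
    comul ∘ₗ antipode R (A := H) =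
      map (antipode R) (antipode R) ∘ₗ (TensorProduct.comm R H H).toLinearMap ∘ₗ comul := by
  set ι₁ := (Algebra.TensorProduct.includeLeft : H →ₐ[R] H ⊗[R] H)
  set ι₂ := (Algebra.TensorProduct.includeRight : H →ₐ[R] H ⊗[R] H)
  have hcomul : toConv (comul (R := R) (A := H)) =
      toConv (ι₁.toLinearMap ∘ₗ .id) * toConv (ι₂.toLinearMap ∘ₗ .id) := by
    rw [LinearMap.includeLeft_convMul_includeRight, map_id, LinearMap.id_comp]
  have hleft : toConv (map (antipode R) (antipode R) ∘ₗ
      (TensorProduct.comm R H H).toLinearMap ∘ₗ comul) * toConv (comul (R := R) (A := H)) = 1 := by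
    rw [← LinearMap.includeRight_convMul_includeLeft, hcomul, mul_assoc,
      ← mul_assoc (toConv (ι₁.toLinearMap ∘ₗ antipode R)),
      LinearMap.algHom_comp_convMul_eq_one ι₁ LinearMap.antipode_mul_id, one_mul,
      LinearMap.algHom_comp_convMul_eq_one ι₂ LinearMap.antipode_mul_id]
  exact congr(ofConv $(left_inv_eq_right_inv hleft LinearMap.comul_right_inv)).symm

theorem antipode_mem_adjoin {s : Set H} (hs : ∀ x ∈ s, antipode R x ∈ s) :
    ∀ x ∈ Algebra.adjoin R s, antipode R x ∈ Algebra.adjoin R s := by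
  suffices Algebra.adjoin R s ≤ (Algebra.adjoin R s).op.comap (antipodeAlgHomOp R H) from
    fun x hx ↦ this hx
  exact Algebra.adjoin_le fun x hx ↦ Algebra.subset_adjoin (hs x hx)

end HopfAlgebra

namespace Submodule

section TensorSpan

variable {R M N P Q : Type*} [CommSemiring R] [AddCommMonoid M] [Module R M]
  [AddCommMonoid N] [Module R N] [AddCommMonoid P] [Module R P] [AddCommMonoid Q] [Module R Q]

theorem span_tmul_eq_map₂_mk (p : Submodule R M) (q : Submodule R N) :
    span R {t : M ⊗[R] N | ∃ a ∈ p, ∃ b ∈ q, t = a ⊗ₜ[R] b} =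
      map₂ (TensorProduct.mk R M N) p q := by
  rw [map₂_eq_span_image2]
  congr 1
  ext t
  simp [Set.mem_image2, eq_comm]

theorem map_tensorMap_map₂_mk (f : M →ₗ[R] P) (g : N →ₗ[R] Q) (p : Submodule R M)
    (q : Submodule R N) :
    (map₂ (TensorProduct.mk R M N) p q).map (TensorProduct.map f g) =
      map₂ (TensorProduct.mk R P Q) (p.map f) (q.map g) := by
  rw [map_map₂, map₂_map_left, map₂_map_right]
  rfl

theorem map_comm_map₂_mk (p : Submodule R M) (q : Submodule R N) :
    (map₂ (TensorProduct.mk R M N) p q).map (TensorProduct.comm R M N).toLinearMap =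
      map₂ (TensorProduct.mk R N M) q p := by
  rw [map_map₂, ← map₂_flip]
  rfl

end TensorSpan

section Orbit

variable {R M : Type*} [Semiring R] [AddCommMonoid M] [Module R M] (T : Module.End R M)
  (W : Submodule R M)

theorem le_iSup_map_pow : W ≤ ⨆ i : ℕ, W.map (T ^ i) :=
  le_iSup_of_le 0 (by simp [Module.End.one_eq_id])

theorem map_iSup_map_pow_le : (⨆ i : ℕ, W.map (T ^ i)).map T ≤ ⨆ i : ℕ, W.map (T ^ i) := by
  rw [map_iSup]
  refine iSup_le fun i ↦ le_iSup_of_le (i + 1) ?_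
  rw [← map_comp, pow_succ', Module.End.mul_eq_comp]

variable {T W} in
theorem FG.iSup_map_pow (hW : W.FG) (hT : IsOfFinOrder T) : (⨆ i : ℕ, W.map (T ^ i)).FG := by
  have : ⨆ i : ℕ, W.map (T ^ i) = ⨆ i : Fin (orderOf T), W.map (T ^ (i : ℕ)) :=
    le_antisymm
      (iSup_le fun i ↦ le_iSup_of_le ⟨i % orderOf T, Nat.mod_lt _ hT.orderOf_pos⟩
        (by rw [pow_mod_orderOf]))
      (iSup_le fun i ↦ le_iSup_of_le (i : ℕ) le_rfl)
  rw [this]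
  exact fg_iSup _ fun i ↦ hW.map _

end Orbit

theorem FG.fg_adjoin {R A : Type*} [CommSemiring R] [Semiring A] [Algebra R A]
    {p : Submodule R A} (hp : p.FG) : (Algebra.adjoin R (p : Set A)).FG := by
  obtain ⟨t, rfl⟩ := hp
  rw [Algebra.adjoin_span]
  exact Subalgebra.fg_adjoin_finset t

end Submodule

theorem Subalgebra.toSubmodule_range_tensorProductMap_val {R A : Type*} [CommSemiring R]
    [Semiring A] [Algebra R A] (S : Subalgebra R A) :
    toSubmodule (Algebra.TensorProduct.map S.val S.val).range =
      Submodule.map₂ (TensorProduct.mk R A A) (toSubmodule S) (toSubmodule S) := by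
  have : toSubmodule (Algebra.TensorProduct.map S.val S.val).range =
      LinearMap.range (TensorProduct.map S.val.toLinearMap S.val.toLinearMap) := by
    ext
    exact Iff.rfl
  rw [this, TensorProduct.range_map]
  congr <;> ext <;> simp

section HopfSubobjects

variable {k : Type*} [CommRing k] {H : Type*} [Ring H] [HopfAlgebra k H]

theorem isSubcoalgebra_iff {C : Submodule k H} :
    IsSubcoalgebra C ↔
      ∀ x ∈ C, comul (R := k) x ∈ Submodule.map₂ (TensorProduct.mk k H H) C C := by
  rw [IsSubcoalgebra, Submodule.span_tmul_eq_map₂_mk]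

theorem isSubcoalgebra_iSup {ι : Sort*} {C : ι → Submodule k H}
    (hC : ∀ i, IsSubcoalgebra (C i)) : IsSubcoalgebra (⨆ i, C i) := by
  rw [isSubcoalgebra_iff]
  intro x hx
  refine Submodule.iSup_induction C (motive := fun y ↦ comul (R := k) y ∈ _) hx
    (fun i y hy ↦ ?_) (by simp) fun y z hy hz ↦ by simpa using add_mem hy hz
  exact Submodule.map₂_le_map₂ (le_iSup C i) (le_iSup C i) (isSubcoalgebra_iff.1 (hC i) y hy)

theorem IsSubcoalgebra.map_antipode {C : Submodule k H} (hC : IsSubcoalgebra C) :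
    IsSubcoalgebra (C.map (HopfAlgebra.antipode k)) := by
  rw [isSubcoalgebra_iff] at hC ⊢
  rintro _ ⟨x, hx, rfl⟩
  rw [← Submodule.map_tensorMap_map₂_mk, ← Submodule.map_comm_map₂_mk,
    ← LinearMap.comp_apply (g := HopfAlgebra.antipode k), HopfAlgebra.comul_comp_antipode]
  exact Submodule.mem_map_of_mem (Submodule.mem_map_of_mem (hC x hx))

theorem IsSubcoalgebra.map_antipode_pow {C : Submodule k H} (hC : IsSubcoalgebra C) (n : ℕ) :
    IsSubcoalgebra (C.map (HopfAlgebra.antipode k ^ n)) := by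
  induction n with
  | zero => simpa [Module.End.one_eq_id] using hC
  | succ n ih => simpa [pow_succ', Module.End.mul_eq_comp, Submodule.map_comp] using ih.map_antipode

theorem IsSubcoalgebra.comul_mem_adjoin {X : Submodule k H} (hX : IsSubcoalgebra X) :
    ∀ x ∈ Algebra.adjoin k (X : Set H), comul (R := k) x ∈
      Submodule.map₂ (TensorProduct.mk k H H) (Subalgebra.toSubmodule (Algebra.adjoin k X))
        (Subalgebra.toSubmodule (Algebra.adjoin k X)) := by
  set A := Algebra.adjoin k (X : Set H)
  rw [← Subalgebra.toSubmodule_range_tensorProductMap_val]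
  suffices A ≤ (Algebra.TensorProduct.map A.val A.val).range.comap (Bialgebra.comulAlgHom k H) from
    fun x hx ↦ this hx
  refine Algebra.adjoin_le fun x hx ↦ ?_
  change comul x ∈ Subalgebra.toSubmodule _
  rw [Subalgebra.toSubmodule_range_tensorProductMap_val]
  exact Submodule.map₂_le_map₂ (fun _ hy ↦ Algebra.subset_adjoin hy)
    (fun _ hy ↦ Algebra.subset_adjoin hy)
    (isSubcoalgebra_iff.1 hX x hx)

theorem IsSubcoalgebra.isHopfSubalgebra_adjoin {X : Submodule k H} (hX : IsSubcoalgebra X)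
    (hSX : X.map (HopfAlgebra.antipode k) ≤ X) : IsHopfSubalgebra (Algebra.adjoin k (X : Set H)) :=
  ⟨by simpa only [← Submodule.span_tmul_eq_map₂_mk, Subalgebra.mem_toSubmodule]
      using hX.comul_mem_adjoin,
    HopfAlgebra.antipode_mem_adjoin fun _ hx ↦ hSX (Submodule.mem_map_of_mem hx)⟩

end HopfSubobjects

/-- If the antipode of a Hopf algebra `H` has finite order and every element of `H` lies
in a finite-dimensional subcoalgebra, then `H` is locally affine: every finite subset is
contained in an affine Hopf subalgebra. -/
theorem stmt18 {k : Type u} [Field k] {H : Type v} [Ring H] [HopfAlgebra k H]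
    (m : ℕ) (hm : 1 ≤ m)
    (hS : (HopfAlgebra.antipode (R := k) (A := H)) ^ m = LinearMap.id)
    (hfd : ∀ h : H, ∃ C : Submodule k H, h ∈ C ∧ FiniteDimensional k ↥C ∧ IsSubcoalgebra C)
    (s : Finset H) :
    ∃ K : Subalgebra k H, IsHopfSubalgebra K ∧ K.FG ∧ ↑s ⊆ (K : Set H) := by
  choose C hmem hfin hsub using hfd
  set S := HopfAlgebra.antipode k (A := H)
  set W := ⨆ x : ↥s, C x
  set X := ⨆ i : ℕ, W.map (S ^ i)
  have hX : IsSubcoalgebra X :=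
    isSubcoalgebra_iSup fun i ↦ (isSubcoalgebra_iSup fun x : ↥s ↦ hsub x).map_antipode_pow i
  have hWfg : W.FG :=
    Submodule.fg_iSup _ fun x : ↥s ↦ (Submodule.fg_iff_finiteDimensional _).2 (hfin x)
  have hXfg : X.FG := hWfg.iSup_map_pow (isOfFinOrder_iff_pow_eq_one.2 ⟨m, hm, hS⟩)
  refine ⟨Algebra.adjoin k X, hX.isHopfSubalgebra_adjoin (Submodule.map_iSup_map_pow_le S W),
    hXfg.fg_adjoin, fun x hx ↦ Algebra.subset_adjoin ?_⟩
  exact Submodule.le_iSup_map_pow S W (Submodule.mem_iSup_of_mem ⟨x, hx⟩ (hmem x))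
end
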